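/- Let F be a field and n, d ≥ 1. The F-linear map Φ : F_{Ā,C̄}[X] → A'_d(R) given by evaluation at (Z_1,…,Z_n) under the ∘ product is injective on polynomials of degree at most d: if f ∈ F_{Ā,C̄}[X] is nonzero and has degree ≤ d, then Φ(f) ≠ 0. -/

import Mathlib

/-! For a monomial `m` with `|m| ≤ d`, the `(1, |m| + 1, 1)` entry of `m(Z_1, …, Z_n)` is the single
commutative monomial `∏_t z_{σ(t), t, ℓ(t)}`, recording for the `t`-th leaf its variable `σ(t)` and
its level `ℓ(t)` in the tree. Since the positions `t` are distinct, this monomial determines the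
sequence of pairs `(σ(t), ℓ(t))`, and that sequence determines `m`: the leaf levels of binary trees
form a prefix code. So the coefficient of this monomial in the entry of `Φ(f)` is the coefficient
of `m` in `f`. -/

noncomputable section

open scoped BigOperators

namespace NAPIT

/-- The list of (leaf label, leaf level) pairs of a nonassociative monomial (element of the
free magma), in left-to-right order, where the root of the monomial is at level `s`. -/
def leafData {n : ℕ} : FreeMagma (Fin n) → ℕ → List (Fin n × ℕ)
  | FreeMagma.of i, s => [(i, s)]
  | FreeMagma.mul x y, s => leafData x (s + 1) ++ leafData y (s + 1)

/-- The degree (number of leaves) of a nonassociative monomial. -/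
def degM {n : ℕ} : FreeMagma (Fin n) → ℕ
  | FreeMagma.of _ => 1
  | FreeMagma.mul x y => degM x + degM y

/-- The depth of a nonassociative monomial (root at level 1; the depth is the maximal level
of a leaf). -/
def depthM {n : ℕ} : FreeMagma (Fin n) → ℕ
  | FreeMagma.of _ => 1
  | FreeMagma.mul x y => max (depthM x) (depthM y) + 1

/-- Evaluation of a nonassociative monomial at `b : Fin n → A`, using `mul` as the product on
`A`; this is the unique magma homomorphism `FreeMagma (Fin n) → (A, mul)` with `x_i ↦ b i`. -/
def evalWith {n : ℕ} {A : Type*} (mul : A → A → A) (b : Fin n → A) : FreeMagma (Fin n) → A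
  | FreeMagma.of i => b i
  | FreeMagma.mul x y => mul (evalWith mul b x) (evalWith mul b y)

/-- The multiset of all variants `m_ε` of a monomial `m`, where `ε` ranges over all choices of
a Boolean for each internal node of `m`, and `m_ε` is obtained from `m` by swapping the two
children at exactly those internal nodes where `ε` is true (counted with multiplicity). -/
def variants {n : ℕ} : FreeMagma (Fin n) → Multiset (FreeMagma (Fin n))
  | FreeMagma.of i => {FreeMagma.of i}
  | FreeMagma.mul x y =>
      (variants x).bind fun x' => (variants y).bind fun y' =>
        {FreeMagma.mul x' y', FreeMagma.mul y' x'}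

/-- The underlying module of the algebra `A'_d(R)`: arrays `x[i,j,k]` with
`i, j ∈ Fin (d+1)`, `k ∈ Fin d` (zero-based; the paper's indices are shifted by one). -/
def Arr (d : ℕ) (R : Type*) : Type _ := Fin (d + 1) → Fin (d + 1) → Fin d → R

namespace Arr

variable {d : ℕ} {R : Type*}

instance instAddCommGroup [AddCommGroup R] : AddCommGroup (Arr d R) :=
  inferInstanceAs (AddCommGroup (Fin (d + 1) → Fin (d + 1) → Fin d → R))

instance instModule {S : Type*} [Semiring S] [AddCommGroup R] [Module S R] :
    Module S (Arr d R) :=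
  inferInstanceAs (Module S (Fin (d + 1) → Fin (d + 1) → Fin d → R))

/-- The bilinear product `∘` of `A'_d(R)`:
`(x ∘ y)[i,j,k] = ∑_{l} x[i,l,k+1] * y[l,j,k+1]` if `k+1` is a legal third index, else `0`. -/
def aprod [CommRing R] (x y : Arr d R) : Arr d R := fun i j k =>
  if h : (k : ℕ) + 1 < d then
    ∑ l : Fin (d + 1), x i l ⟨(k : ℕ) + 1, h⟩ * y l j ⟨(k : ℕ) + 1, h⟩
  else 0

instance instMul [CommRing R] : Mul (Arr d R) := ⟨aprod⟩

end Arr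

/-- The algebra `C'_d(R)`: same underlying module as `A'_d(R)`, with the anticommutator
product `a ⊙ b = a ∘ b + b ∘ a`. -/
def CArr (d : ℕ) (R : Type*) : Type _ := Arr d R

namespace CArr

variable {d : ℕ} {R : Type*}

/-- The identity map `A'_d(R) → C'_d(R)` of underlying modules. -/
def ofArr (x : Arr d R) : CArr d R := x

/-- The identity map `C'_d(R) → A'_d(R)` of underlying modules. -/
def toArr (x : CArr d R) : Arr d R := x

instance instAddCommGroup [AddCommGroup R] : AddCommGroup (CArr d R) :=
  inferInstanceAs (AddCommGroup (Arr d R))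

instance instModule {S : Type*} [Semiring S] [AddCommGroup R] [Module S R] :
    Module S (CArr d R) :=
  inferInstanceAs (Module S (Arr d R))

instance instMul [CommRing R] : Mul (CArr d R) :=
  ⟨fun a b => ofArr (toArr a * toArr b + toArr b * toArr a)⟩

end CArr

/-- The element `Z_i ∈ A'_d(R)`, `R = MvPolynomial (Fin n × Fin d × Fin d) F`, whose
`(j, j+1, k)` entry is the indeterminate `z_{i,j,k}` and whose other entries vanish. -/
def Z (F : Type*) [CommRing F] (n d : ℕ) (i : Fin n) :
    Arr d (MvPolynomial (Fin n × Fin d × Fin d) F) := fun j j' k =>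
  if h : (j : ℕ) < d ∧ (j' : ℕ) = (j : ℕ) + 1 then
    MvPolynomial.X (i, ⟨(j : ℕ), h.1⟩, k)
  else 0

/-- The element `Z_i` regarded as an element of `C'_d(R)`. -/
def ZC (F : Type*) [CommRing F] (n d : ℕ) (i : Fin n) :
    CArr d (MvPolynomial (Fin n × Fin d × Fin d) F) := CArr.ofArr (Z F n d i)

/-- The monomial `∏_{t=1}^{d'} z_{σ_m(t), (t-1) + k1, (l^m_t - 1) + k2}` associated to a
nonassociative monomial `m` of degree `d'` and offsets `k1, k2` (all indices zero-based; the
paper's 1-based offsets are `k1 + 1`, `k2 + 1`).  Indices which would fall out of range are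
discarded (this never happens in the intended range of parameters). -/
def monProd (F : Type*) [CommRing F] {n : ℕ} (d : ℕ) (k1 k2 : ℕ) (m : FreeMagma (Fin n)) :
    MvPolynomial (Fin n × Fin d × Fin d) F :=
  ((((leafData m 1).zipIdx).map Prod.swap).map fun p =>
    if h : p.1 + k1 < d ∧ p.2.2 - 1 + k2 < d then
      MvPolynomial.X (p.2.1, ⟨p.1 + k1, h.1⟩, ⟨p.2.2 - 1 + k2, h.2⟩)
    else 0).prod

/-- `ψ(m) = ∑_ε ∏_{t=1}^{d'} z_{σ_{m_ε}(t), t, l^{m_ε}_t}` (1-based), the sum running over all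
choices `ε` of a Boolean for each internal node of `m`. -/
def psi (F : Type*) [CommRing F] {n : ℕ} (d : ℕ) (m : FreeMagma (Fin n)) :
    MvPolynomial (Fin n × Fin d × Fin d) F :=
  ((variants m).map fun m' => monProd F d 0 0 m').sum

/-- The coefficient function of an element of the free nonunital nonassociative algebra. -/
def coeffOf {F : Type*} [Semiring F] {n : ℕ}
    (f : FreeNonUnitalNonAssocAlgebra F (Fin n)) : FreeMagma (Fin n) →₀ F := f.coeff

/-- Evaluation of an element of the free nonunital nonassociative algebra on `x_1, …, x_n` at
the tuple `b`, with `mul` as the product of the target: the linear extension of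
`m ↦ evalWith mul b m`, i.e. the unique nonunital `F`-algebra homomorphism sending
`x_i ↦ b i` into `(A, mul)`. -/
def evalNAWith {F : Type*} [Semiring F] {n : ℕ} {A : Type*}
    [AddCommMonoid A] [Module F A] (mul : A → A → A) (b : Fin n → A)
    (f : FreeNonUnitalNonAssocAlgebra F (Fin n)) : A :=
  Finsupp.sum (coeffOf f) fun m c => c • evalWith mul b m

/-- Evaluation of an element of the free nonunital nonassociative algebra at a tuple `b` of
elements of a (not necessarily unital/associative) algebra `A`: the unique nonunital
`F`-algebra homomorphism sending `x_i ↦ b i`. -/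
def evalNA {F : Type*} [Semiring F] {n : ℕ} {A : Type*}
    [AddCommMonoid A] [Mul A] [Module F A] (b : Fin n → A)
    (f : FreeNonUnitalNonAssocAlgebra F (Fin n)) : A :=
  evalNAWith (· * ·) b f

/-- Evaluation of an element of the unitization of the free nonunital nonassociative algebra
at a tuple `b` of elements of the unitization of `A`: the unique unital `F`-algebra
homomorphism sending `x_i ↦ b i` (and the adjoined unit to the unit). -/
def evalUnit {F : Type*} [CommSemiring F] {n : ℕ} {A : Type*}
    [AddCommMonoid A] [Mul A] [Module F A] (b : Fin n → Unitization F A)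
    (f : Unitization F (FreeNonUnitalNonAssocAlgebra F (Fin n))) : Unitization F A :=
  Unitization.inl f.fst + evalNA b f.snd

/-- The commutativity congruence on the free magma: the smallest equivalence relation with
`m₁ * m₂ ≈ m₂ * m₁` and compatible with the product. -/
inductive CommEq {n : ℕ} : FreeMagma (Fin n) → FreeMagma (Fin n) → Prop
  | refl (m : FreeMagma (Fin n)) : CommEq m m
  | symm {a b : FreeMagma (Fin n)} : CommEq a b → CommEq b a
  | trans {a b c : FreeMagma (Fin n)} : CommEq a b → CommEq b c → CommEq a c
  | comm (a b : FreeMagma (Fin n)) : CommEq (a * b) (b * a)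
  | mul_congr {a a' b b' : FreeMagma (Fin n)} :
      CommEq a a' → CommEq b b' → CommEq (a * b) (a' * b')

/-- The basis monomial `m` of the free nonunital nonassociative algebra. -/
def single1 (F : Type*) [Semiring F] {n : ℕ} (m : FreeMagma (Fin n)) :
    FreeNonUnitalNonAssocAlgebra F (Fin n) :=
  MonoidAlgebra.ofCoeff (Finsupp.single m 1 : FreeMagma (Fin n) →₀ F)

/-- `I_comm`: the `F`-linear span of `{m − m' : m ≈ m'}` inside the free nonunital
nonassociative algebra. -/
def Icomm (F : Type*) [Field F] (n : ℕ) :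
    Submodule F (FreeNonUnitalNonAssocAlgebra F (Fin n)) :=
  Submodule.span F
    {x | ∃ m m' : FreeMagma (Fin n), CommEq m m' ∧ x = single1 F m - single1 F m'}

section LeafTriples

variable {α : Type*}

/-- The leaves of `m` in left-to-right order, as triples (label, position, level), positions
counted from `p` and the root at level `k`. -/
def leafTriples : ℕ → ℕ → FreeMagma α → List (α × ℕ × ℕ)
  | p, k, .of a => [(a, p, k)]
  | p, k, x * y => leafTriples p (k + 1) x ++ leafTriples (p + x.length) (k + 1) y

@[simp]
theorem leafTriples_of (p k : ℕ) (a : α) : leafTriples p k (.of a) = [(a, p, k)] := rfl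

@[simp]
theorem leafTriples_mul (p k : ℕ) (x y : FreeMagma α) :
    leafTriples p k (x * y) = leafTriples p (k + 1) x ++ leafTriples (p + x.length) (k + 1) y :=
  rfl

theorem leafTriples_ne_nil (p k : ℕ) (m : FreeMagma α) : leafTriples p k m ≠ [] := by
  induction m generalizing p k with
  | ih1 a => simp
  | ih2 x y ihx _ => simp [ihx]

theorem mem_leafTriples {p k : ℕ} {m : FreeMagma α} {t : α × ℕ × ℕ}
    (ht : t ∈ leafTriples p k m) : p ≤ t.2.1 ∧ t.2.1 < p + m.length ∧ k ≤ t.2.2 := by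
  induction m generalizing p k with
  | ih1 a =>
    obtain rfl := List.mem_singleton.mp ht
    simp
  | ih2 x y ihx ihy =>
    rcases List.mem_append.mp ht with hx | hy
    · have := ihx hx
      have := y.length_pos
      simp only [FreeMagma.length]
      omega
    · have := ihy hy
      simp only [FreeMagma.length]
      omega

theorem leafTriples_pairwise (p k : ℕ) (m : FreeMagma α) :
    (leafTriples p k m).Pairwise fun s t => s.2.1 < t.2.1 := by
  induction m generalizing p k with
  | ih1 a => simp
  | ih2 x y ihx ihy =>
    refine List.pairwise_append.mpr ⟨ihx _ _, ihy _ _, fun s hs t ht => ?_⟩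
    have := mem_leafTriples hs
    have := mem_leafTriples ht
    omega

/-- The first leaf of a product lies strictly below the root level `k`. -/
theorem leafTriples_mul_append_ne_cons (p k : ℕ) (x y : FreeMagma α) (a : α)
    (t t' : List (α × ℕ × ℕ)) : leafTriples p k (x * y) ++ t ≠ (a, p, k) :: t' := by
  obtain ⟨s, l, hs⟩ := List.exists_cons_of_ne_nil (leafTriples_ne_nil p (k + 1) x)
  have hlevel := (mem_leafTriples (hs ▸ List.mem_cons_self : s ∈ leafTriples p (k + 1) x)).2.2
  intro h
  rw [leafTriples_mul, hs, List.cons_append, List.cons_append, List.cons.injEq] at h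
  simp [h.1] at hlevel

/-- The leaf list is a prefix code: it can be parsed back uniquely from any list it starts. -/
theorem eq_of_leafTriples_append_eq {p k : ℕ} {m m' : FreeMagma α} {t t' : List (α × ℕ × ℕ)}
    (h : leafTriples p k m ++ t = leafTriples p k m' ++ t') : m = m' ∧ t = t' := by
  induction m generalizing p k m' t t' with
  | ih1 a =>
    cases m' with
    | of b =>
      simp only [leafTriples_of, List.singleton_append, List.cons.injEq, Prod.mk.injEq] at h
      exact ⟨congrArg _ h.1.1, h.2⟩
    | mul x' y' => exact absurd h.symm (leafTriples_mul_append_ne_cons _ _ _ _ _ _ _)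
  | ih2 x y ihx ihy =>
    cases m' with
    | of b => exact absurd h (leafTriples_mul_append_ne_cons _ _ _ _ _ _ _)
    | mul x' y' =>
      simp only [FreeMagma.mul_eq, leafTriples_mul, List.append_assoc] at h
      obtain ⟨rfl, h⟩ := ihx h
      obtain ⟨rfl, rfl⟩ := ihy h
      exact ⟨rfl, rfl⟩

theorem leafTriples_injective (p k : ℕ) : Function.Injective (leafTriples (α := α) p k) :=
  fun m m' h => (eq_of_leafTriples_append_eq (t := []) (t' := []) (by rw [h])).1

variable [DecidableEq α]

def leafExponent (p k : ℕ) (m : FreeMagma α) : (α × ℕ × ℕ) →₀ ℕ :=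
  Multiset.toFinsupp (leafTriples p k m)

theorem leafExponent_of (p k : ℕ) (a : α) :
    leafExponent p k (.of a) = Finsupp.single (a, p, k) 1 :=
  Multiset.toFinsupp_singleton _

theorem leafExponent_mul (p k : ℕ) (x y : FreeMagma α) :
    leafExponent p k (x * y) = leafExponent p (k + 1) x + leafExponent (p + x.length) (k + 1) y := by
  rw [leafExponent, leafTriples_mul, ← Multiset.coe_add, Multiset.toFinsupp_add]
  rfl

/-- Positions are distinct and increasing, so the multiset of leaf triples remembers their order. -/
theorem leafExponent_injective (p k : ℕ) : Function.Injective (leafExponent (α := α) p k) := by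
  intro m m' h
  have hperm := Multiset.coe_eq_coe.mp (Multiset.toFinsupp.injective h)
  refine leafTriples_injective p k (hperm.eq_of_pairwise ?_ (leafTriples_pairwise p k m)
    (leafTriples_pairwise p k m'))
  exact fun s t _ _ hst hts => absurd hts (lt_asymm hst)

end LeafTriples

theorem degM_eq_length {n : ℕ} (m : FreeMagma (Fin n)) : degM m = m.length := by
  induction m with
  | ih1 i => rfl
  | ih2 x y ihx ihy => simp only [degM, FreeMagma.length, ihx, ihy]

theorem one_le_depthM {n : ℕ} (m : FreeMagma (Fin n)) : 1 ≤ depthM m := by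
  cases m <;> simp [depthM]

theorem depthM_le_length {n : ℕ} (m : FreeMagma (Fin n)) : depthM m ≤ m.length := by
  induction m with
  | ih1 i => rfl
  | ih2 x y ihx ihy =>
    have := x.length_pos
    have := y.length_pos
    simp only [depthM, FreeMagma.length]
    omega

section Evaluation

open MvPolynomial

theorem Arr.sum_apply {d : ℕ} {R ι : Type*} [AddCommGroup R] (s : Finset ι) (g : ι → Arr d R)
    (i j : Fin (d + 1)) (k : Fin d) : (∑ a ∈ s, g a) i j k = ∑ a ∈ s, g a i j k :=
  map_sum ((Pi.evalAddMonoidHom _ k).comp ((Pi.evalAddMonoidHom _ j).comp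
    (Pi.evalAddMonoidHom (fun _ => Fin (d + 1) → Fin d → R) i))) g s

@[simp]
theorem Arr.zero_apply {d : ℕ} {R : Type*} [AddCommGroup R] (i j : Fin (d + 1)) (k : Fin d) :
    (0 : Arr d R) i j k = 0 :=
  rfl

theorem evalNA_apply {F R : Type*} [Semiring F] [CommRing R] [Module F R] {n d : ℕ}
    (b : Fin n → Arr d R) (f : FreeNonUnitalNonAssocAlgebra F (Fin n))
    (i j : Fin (d + 1)) (k : Fin d) :
    evalNA b f i j k = (coeffOf f).sum fun m c => c • evalWith (· * ·) b m i j k :=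
  Arr.sum_apply _ _ i j k

variable {F : Type*} [CommRing F] {n d : ℕ}

/-- Renaming `z_{i,j,k}` to `(i, j, k) ∈ Fin n × ℕ × ℕ` frees leaf positions and levels from
range proofs. -/
theorem rename_evalWith_Z_apply (m : FreeMagma (Fin n)) (j j' : Fin (d + 1)) (k : Fin d)
    (hk : (k : ℕ) + depthM m ≤ d) :
    rename (Prod.map id (Prod.map Fin.val Fin.val)) (evalWith (· * ·) (Z F n d) m j j' k) =
      if (j' : ℕ) = j + m.length then monomial (leafExponent j k m) 1 else 0 := by
  induction m generalizing j j' k with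
  | ih1 i =>
    by_cases h : (j' : ℕ) = j + 1
    · have hj : (j : ℕ) < d := by omega
      simp only [evalWith, Z, hj, h, and_self, ↓reduceDIte, rename_X,
        Prod.map_apply, id_eq, FreeMagma.length, ↓reduceIte, leafExponent_of]
      rfl
    · simp [evalWith, Z, h]
  | ih2 x y ihx ihy =>
    have hdepth : depthM (x * y) = max (depthM x) (depthM y) + 1 := rfl
    have := one_le_depthM x
    have hk' : (k : ℕ) + 1 < d := by omega
    set k' : Fin d := ⟨k + 1, hk'⟩
    have hx : (k' : ℕ) + depthM x ≤ d := by simp only [k']; omega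
    have hy : (k' : ℕ) + depthM y ≤ d := by simp only [k']; omega
    set ι := Prod.map (@id (Fin n)) (Prod.map (@Fin.val d) (@Fin.val d))
    let Mx := monomial (R := F) (leafExponent j k' x) 1
    let My := fun l => monomial (R := F) (leafExponent l k' y) 1
    have hprod : evalWith (· * ·) (Z F n d) (x * y) j j' k =
        ∑ l, evalWith (· * ·) (Z F n d) x j l k' * evalWith (· * ·) (Z F n d) y l j' k' :=
      dif_pos hk'
    calc rename ι (evalWith (· * ·) (Z F n d) (x * y) j j' k)
        = ∑ l : Fin (d + 1), (if (l : ℕ) = j + x.length then Mx else 0) *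
            if (j' : ℕ) = l + y.length then My l else 0 := by
          rw [hprod, map_sum]
          exact Finset.sum_congr rfl fun l _ => by rw [map_mul, ihx j l k' hx, ihy l j' k' hy]
      _ = ∑ l ∈ Finset.range (d + 1), (if l = j + x.length then Mx else 0) *
            if (j' : ℕ) = l + y.length then My l else 0 :=
          Fin.sum_univ_eq_sum_range (fun l => (if l = j + x.length then Mx else 0) *
            if (j' : ℕ) = l + y.length then My l else 0) _
      _ = if j + x.length < d + 1 then
            Mx * if (j' : ℕ) = j + x.length + y.length then My (j + x.length) else 0
          else 0 := by
          simp only [ite_mul, zero_mul, Finset.sum_ite_eq', Finset.mem_range]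
      _ = _ := by
          simp only [FreeMagma.length, leafExponent_mul, Mx, My, k']
          split_ifs <;> first | omega | simp [monomial_mul]

theorem coeff_rename_evalWith_Z_apply (m m₀ : FreeMagma (Fin n)) (j j' : Fin (d + 1)) (k : Fin d)
    (hk : (k : ℕ) + depthM m ≤ d) :
    coeff (leafExponent j k m₀)
        (rename (Prod.map id (Prod.map Fin.val Fin.val)) (evalWith (· * ·) (Z F n d) m j j' k)) =
      if (j' : ℕ) = j + m.length ∧ m = m₀ then 1 else 0 := by
  rw [rename_evalWith_Z_apply m j j' k hk]
  split_ifs <;> simp_all [coeff_monomial, (leafExponent_injective _ _).eq_iff]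

theorem coeff_rename_evalNA_Z_apply (f : FreeNonUnitalNonAssocAlgebra F (Fin n))
    (m₀ : FreeMagma (Fin n)) (j j' : Fin (d + 1)) (k : Fin d)
    (hk : ∀ m ∈ (coeffOf f).support, (k : ℕ) + depthM m ≤ d) :
    coeff (leafExponent j k m₀)
        (rename (Prod.map id (Prod.map Fin.val Fin.val)) (evalNA (Z F n d) f j j' k)) =
      if (j' : ℕ) = j + m₀.length then coeffOf f m₀ else 0 := by
  rw [evalNA_apply, Finsupp.sum, map_sum, coeff_sum]
  rw [Finset.sum_congr rfl fun m hm => by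
    rw [map_smul, coeff_smul, coeff_rename_evalWith_Z_apply m m₀ j j' k (hk m hm)]]
  rw [Finset.sum_eq_single m₀ (fun m _ hm => by simp [hm])
    (fun hm => by simp [Finsupp.notMem_support_iff.mp hm])]
  simp

end Evaluation

theorem eval_free_at_Z_ne_zero_general {F : Type*} [Field F] (n d : ℕ)
    (f : FreeNonUnitalNonAssocAlgebra F (Fin n)) (hf : f ≠ 0)
    (hdeg : ∀ m ∈ (coeffOf f).support, degM m ≤ d) :
    evalNA (Z F n d) f ≠ 0 := by
  obtain ⟨m₀, hm₀⟩ : (coeffOf f).support.Nonempty :=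
    Finsupp.support_nonempty_iff.mpr fun h => hf (MonoidAlgebra.coeff_eq_zero.mp h)
  have hlen : ∀ m ∈ (coeffOf f).support, m.length ≤ d := fun m hm =>
    degM_eq_length m ▸ hdeg m hm
  have hd : 0 < d := m₀.length_pos.trans_le (hlen m₀ hm₀)
  intro hzero
  have hcoeff := coeff_rename_evalNA_Z_apply f m₀ 0 ⟨m₀.length, Nat.lt_succ_of_le (hlen m₀ hm₀)⟩ ⟨0, hd⟩
    fun m hm => (zero_add _).trans_le ((depthM_le_length m).trans (hlen m hm))
  rw [hzero, Arr.zero_apply, map_zero, MvPolynomial.coeff_zero, if_pos (by simp)] at hcoeff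
  exact Finsupp.mem_support_iff.mp hm₀ hcoeff.symm

/-- Lemma 3.2 of the paper, nonunital form.  Let `F` be a field and
`n, d ≥ 1`.  The evaluation map `Φ : F_{Ā,C̄}[X] → A'_d(R)` at `(Z_1, …, Z_n)` (the unique
nonunital `F`-algebra homomorphism sending `x_i ↦ Z_i`, with target carrying the `∘` product)
is injective on polynomials of degree at most `d`: if `f ≠ 0` has degree `≤ d`, then
`Φ(f) ≠ 0`. -/
theorem eval_free_at_Z_ne_zero {F : Type*} [Field F] (n d : ℕ) (hn : 1 ≤ n) (hd : 1 ≤ d)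
    (f : FreeNonUnitalNonAssocAlgebra F (Fin n)) (hf : f ≠ 0)
    (hdeg : ∀ m ∈ (coeffOf f).support, degM m ≤ d) :
    evalNA (Z F n d) f ≠ 0 :=
  eval_free_at_Z_ne_zero_general n d f hf hdeg

end NAPIT
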